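/- The subgroup U of K₂^M(ℝ) generated by symbols {a, b} with a, b > 0 is divisible: every element of U is n-divisible within U for every n ≥ 1. -/

import Mathlib

open scoped TensorProduct

/-- The subgroup of Steinberg relations in `k^× ⊗ k^×`. -/
noncomputable def steinbergSubgroup (k : Type*) [Field k] :
    AddSubgroup (Additive kˣ ⊗[ℤ] Additive kˣ) :=
  AddSubgroup.closure
    {x | ∃ (a : kˣ) (h : (1 : k) - (a : k) ≠ 0),
      x = Additive.ofMul a ⊗ₜ Additive.ofMul (Units.mk0 ((1 : k) - a) h)}

/-- The second Milnor K-group `K₂^M(k)`. -/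
noncomputable def MilnorK2 (k : Type*) [Field k] :=
  (Additive kˣ ⊗[ℤ] Additive kˣ) ⧸ steinbergSubgroup k

noncomputable instance (k : Type*) [Field k] : AddCommGroup (MilnorK2 k) :=
  QuotientAddGroup.Quotient.addCommGroup _

/-- The Milnor symbol `{a, b}` in `K₂^M(k)`. -/
noncomputable def milnorSymbol {k : Type*} [Field k] (a b : kˣ) : MilnorK2 k :=
  QuotientAddGroup.mk (Additive.ofMul a ⊗ₜ Additive.ofMul b)

theorem milnorSymbol_pow_left {k : Type*} [Field k] (a b : kˣ) (n : ℕ) :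
    milnorSymbol (a ^ n) b = n • milnorSymbol a b := by
  rw [milnorSymbol, milnorSymbol, ofMul_pow, ← TensorProduct.smul_tmul']
  exact QuotientAddGroup.mk_nsmul _ _ _

theorem AddSubgroup.exists_nsmul_eq_of_mem_closure {A : Type*} [AddCommGroup A] {s : Set A}
    {n : ℕ} (hs : ∀ x ∈ s, ∃ y ∈ AddSubgroup.closure s, n • y = x) :
    ∀ x ∈ AddSubgroup.closure s, ∃ y ∈ AddSubgroup.closure s, n • y = x := by
  suffices AddSubgroup.closure s ≤ (AddSubgroup.closure s).map (nsmulAddMonoidHom n) by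
    simpa [SetLike.le_def] using this
  exact (AddSubgroup.closure_le _).2 hs

theorem Real.exists_units_pos_pow_eq {c : ℝˣ} (hc : (0 : ℝ) < c) {n : ℕ} (hn : n ≠ 0) :
    ∃ e : ℝˣ, (0 : ℝ) < e ∧ e ^ n = c := by
  obtain ⟨r, hr, hrn⟩ : ∃ r : ℝ, 0 < r ∧ r ^ n = c :=
    ⟨_, Real.rpow_pos_of_pos hc _, Real.rpow_inv_natCast_pow hc.le hn⟩
  exact ⟨Units.mk0 r hr.ne', hr, Units.ext (by simpa using hrn)⟩

/-- The subgroup `U` of `K₂^M(ℝ)` generated by symbols with both entries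
positive is divisible. -/
theorem milnorK2_pos_subgroup_divisible :
    ∀ x ∈ AddSubgroup.closure
      {x : MilnorK2 ℝ | ∃ c d : ℝˣ, (0 : ℝ) < c ∧ (0 : ℝ) < d ∧ x = milnorSymbol c d},
      ∀ n : ℕ, 1 ≤ n →
        ∃ y ∈ AddSubgroup.closure
          {x : MilnorK2 ℝ | ∃ c d : ℝˣ, (0 : ℝ) < c ∧ (0 : ℝ) < d ∧ x = milnorSymbol c d},
          n • y = x := by
  intro x hx n hn
  refine AddSubgroup.exists_nsmul_eq_of_mem_closure ?_ x hx
  rintro _ ⟨c, d, hc, hd, rfl⟩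
  obtain ⟨e, he, rfl⟩ := Real.exists_units_pos_pow_eq hc (Nat.one_le_iff_ne_zero.mp hn)
  exact ⟨milnorSymbol e d, AddSubgroup.subset_closure ⟨e, d, he, hd, rfl⟩,
    (milnorSymbol_pow_left e d n).symm⟩
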